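/- For the root system R of type D(k+1,ℓ)^{(2)}: for all 1 ≤ i ≤ k, 1 ≤ p ≤ ℓ and σ, τ ∈ {−1,1}, there exist α̇, β̇ ∈ V such that σ ε_i + τ δ_p = α̇ + β̇ and: (a) for every m ∈ ℤ, the vectors α̇ + 2mδ and −α̇ + 2mδ lie in R₀(2)^× and satisfy B(γ,γ) ≠ 0; (b) for every m ∈ ℤ, the vectors 2β̇ + (4m+2)δ and −2β̇ + (4m+2)δ lie in R₀(1)^× and satisfy B(γ,γ) ≠ 0; (c) for every m ∈ ℤ, neither α̇ + 2β̇ + mδ nor α̇ − 2β̇ + mδ belongs to R. (Remark 2.1(ii) of the paper, where r = 2.) -/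
import Mathlib


/-- The ambient real vector space with basis `δ, ε₁, …, ε_k, δ₁, …, δ_ℓ`. -/
abbrev Vkl (k l : ℕ) := ℝ × (Fin k → ℝ) × (Fin l → ℝ)

/-- The basis vector `δ`. -/
def del {k l : ℕ} : Vkl k l := (1, 0, 0)

/-- The basis vector `ε_i`. -/
def eps {k l : ℕ} (i : Fin k) : Vkl k l := (0, Pi.single i 1, 0)

/-- The basis vector `δ_j`. -/
def dl {k l : ℕ} (j : Fin l) : Vkl k l := (0, 0, Pi.single j 1)

/-- The symmetric bilinear form with `B(δ,·) = 0`, `B(ε_i,ε_r) = δ_{ir}`,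
`B(δ_j,δ_s) = -δ_{js}` and `B(ε_i,δ_j) = 0`. -/
def B {k l : ℕ} (v w : Vkl k l) : ℝ :=
  (∑ i, v.2.1 i * w.2.1 i) - (∑ j, v.2.2 j * w.2.2 j)

/-- The set of signs `{1, -1}`. -/
def sgns : Set ℝ := {1, -1}

/-- The root system of the twisted affine Lie superalgebra `D(k+1,ℓ)⁽²⁾`. -/
def RootsD2 (k l : ℕ) : Set (Vkl k l) :=
  {v | ∃ m : ℤ, v = m • del} ∪
  {v | ∃ (m : ℤ) (σ : ℝ) (i : Fin k), σ ∈ sgns ∧ v = m • del + σ • eps i} ∪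
  {v | ∃ (m : ℤ) (σ : ℝ) (j : Fin l), σ ∈ sgns ∧ v = m • del + σ • dl j} ∪
  {v | ∃ (m : ℤ) (σ : ℝ) (j : Fin l), σ ∈ sgns ∧
    v = (2 * m) • del + σ • ((2 : ℝ) • dl j)} ∪
  {v | ∃ (m : ℤ) (σ τ : ℝ) (i r : Fin k), σ ∈ sgns ∧ τ ∈ sgns ∧ i ≠ r ∧
    v = (2 * m) • del + σ • eps i + τ • eps r} ∪
  {v | ∃ (m : ℤ) (σ τ : ℝ) (j s : Fin l), σ ∈ sgns ∧ τ ∈ sgns ∧ j ≠ s ∧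
    v = (2 * m) • del + σ • dl j + τ • dl s} ∪
  {v | ∃ (m : ℤ) (σ τ : ℝ) (i : Fin k) (j : Fin l), σ ∈ sgns ∧ τ ∈ sgns ∧
    v = (2 * m) • del + σ • eps i + τ • dl j}

/-- The nonzero roots of the first affine component of the even part,
for type `D(k+1,ℓ)⁽²⁾`. -/
def R01x (k l : ℕ) : Set (Vkl k l) :=
  {v | ∃ (m : ℤ) (σ τ : ℝ) (j s : Fin l), σ ∈ sgns ∧ τ ∈ sgns ∧
    (σ • dl j + τ • dl s : Vkl k l) ≠ 0 ∧ v = (2 * m) • del + σ • dl j + τ • dl s}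

/-- The nonzero roots of the second affine component of the even part,
for type `D(k+1,ℓ)⁽²⁾`. -/
def R02x (k l : ℕ) : Set (Vkl k l) :=
  {v | ∃ (m : ℤ) (σ : ℝ) (i : Fin k), σ ∈ sgns ∧ v = m • del + σ • eps i} ∪
  {v | ∃ (m : ℤ) (σ τ : ℝ) (i r : Fin k), σ ∈ sgns ∧ τ ∈ sgns ∧ i ≠ r ∧
    v = (2 * m) • del + σ • eps i + τ • eps r}

/-- Remark 2.1(ii) of the paper for type `D(k+1,ℓ)⁽²⁾` (with `r = 2`): every
nonsingular `σε_i + τδ_p` decomposes as `α̇ + β̇` where `±α̇ + 2ℤδ` consists of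
real roots of `R₀(2)`, `±2β̇ + (4ℤ+2)δ` consists of real roots of `R₀(1)`, and
`α̇ ± 2β̇ + ℤδ` avoids `R`. -/
theorem remark_ii_D2 (k l : ℕ) (i : Fin k) (p : Fin l) (σ τ : ℝ)
    (hσ : σ ∈ sgns) (hτ : τ ∈ sgns) :
    ∃ αd βd : Vkl k l,
      σ • eps i + τ • dl p = αd + βd ∧
      (∀ m : ℤ,
        (αd + (2 * m) • del ∈ R02x k l ∧
          B (αd + (2 * m) • del) (αd + (2 * m) • del) ≠ 0) ∧
        (-αd + (2 * m) • del ∈ R02x k l ∧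
          B (-αd + (2 * m) • del) (-αd + (2 * m) • del) ≠ 0)) ∧
      (∀ m : ℤ,
        ((2 : ℝ) • βd + (4 * m + 2) • del ∈ R01x k l ∧
          B ((2 : ℝ) • βd + (4 * m + 2) • del) ((2 : ℝ) • βd + (4 * m + 2) • del) ≠ 0) ∧
        (-((2 : ℝ) • βd) + (4 * m + 2) • del ∈ R01x k l ∧
          B (-((2 : ℝ) • βd) + (4 * m + 2) • del)
            (-((2 : ℝ) • βd) + (4 * m + 2) • del) ≠ 0)) ∧
      (∀ m : ℤ,
        αd + (2 : ℝ) • βd + m • del ∉ RootsD2 k l ∧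
        αd - (2 : ℝ) • βd + m • del ∉ RootsD2 k l) := by
  have hσ2 : σ * σ = 1 := by rcases hσ with rfl | rfl <;> norm_num
  have hτ2 : τ * τ = 1 := by rcases hτ with rfl | rfl <;> norm_num
  refine ⟨σ • eps i, τ • dl p, rfl, ?_, ?_, ?_⟩
  · intro m
    have hB : ∀ c : ℤ, B (σ • eps i + c • (del : Vkl k l))
        (σ • eps i + c • del) = 1 := by
      intro c
      simp [B, eps, del, Pi.single_apply, mul_ite, Finset.sum_ite_eq', hσ2]
    have hB' : ∀ c : ℤ, B (-(σ • eps i) + c • (del : Vkl k l))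
        (-(σ • eps i) + c • del) = 1 := by
      intro c
      simp [B, eps, del, Pi.single_apply, mul_ite, Finset.sum_ite_eq', hσ2]
    refine ⟨⟨Or.inl ⟨2 * m, σ, i, hσ, by abel⟩, by rw [hB]; norm_num⟩,
      ⟨Or.inl ⟨2 * m, -σ, i, ?_, by module⟩, by rw [hB']; norm_num⟩⟩
    · rcases hσ with rfl | rfl <;> simp [sgns]
  · intro m
    have hB : ∀ c : ℤ, B ((2:ℝ) • (τ • dl p) + c • (del : Vkl k l))
        ((2:ℝ) • (τ • dl p) + c • del) = -4 := by
      intro c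
      simp [B, dl, del, Pi.single_apply, mul_ite, Finset.sum_ite_eq']
      ring_nf
      nlinarith [hτ2]
    have hB' : ∀ c : ℤ, B (-((2:ℝ) • (τ • dl p)) + c • (del : Vkl k l))
        (-((2:ℝ) • (τ • dl p)) + c • del) = -4 := by
      intro c
      simp [B, dl, del, Pi.single_apply, mul_ite, Finset.sum_ite_eq']
      ring_nf
      nlinarith [hτ2]
    have hne : (τ • dl p + τ • dl p : Vkl k l) ≠ 0 := by
      intro h
      have := congrArg (fun v => v.2.2 p) h
      simp [dl, Pi.single_apply] at this
      rcases hτ with rfl | rfl <;> norm_num at this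
    have hne' : ((-τ) • dl p + (-τ) • dl p : Vkl k l) ≠ 0 := by
      intro h
      have := congrArg (fun v => v.2.2 p) h
      simp [dl, Pi.single_apply] at this
      rcases hτ with rfl | rfl <;> norm_num at this
    refine ⟨⟨⟨2 * m + 1, τ, τ, p, p, hτ, hτ, hne, by module⟩,
        by rw [hB]; norm_num⟩,
      ⟨⟨2 * m + 1, -τ, -τ, p, p, ?_, ?_, hne', by module⟩,
        by rw [hB']; norm_num⟩⟩ <;>
      rcases hτ with rfl | rfl <;> simp [sgns]
  · intro m
    constructor <;>
    · intro h
      rcases h with ((((((⟨m', h⟩ | ⟨m', σ', i', hσ', h⟩) | ⟨m', σ', j', hσ', h⟩) |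
          ⟨m', σ', j', hσ', h⟩) | ⟨m', σ', τ', i', r', hσ', hτ', hir, h⟩) |
          ⟨m', σ', τ', j', s', hσ', hτ', hjs, h⟩) |
          ⟨m', σ', τ', i', j', hσ', hτ', h⟩)
      · have := congrArg (fun v => v.2.1 i) h
        simp [del, eps, dl, Pi.single_apply] at this
        rcases hσ with rfl | rfl <;> norm_num at this
      · have := congrArg (fun v => v.2.2 p) h
        simp [del, eps, dl, Pi.single_apply] at this
        rcases hτ with rfl | rfl <;> norm_num at this
      · have := congrArg (fun v => v.2.1 i) h
        simp [del, eps, dl, Pi.single_apply] at this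
        rcases hσ with rfl | rfl <;> norm_num at this
      · have := congrArg (fun v => v.2.1 i) h
        simp [del, eps, dl, Pi.single_apply] at this
        rcases hσ with rfl | rfl <;> norm_num at this
      · have := congrArg (fun v => v.2.2 p) h
        simp [del, eps, dl, Pi.single_apply] at this
        rcases hτ with rfl | rfl <;> norm_num at this
      · have := congrArg (fun v => v.2.1 i) h
        simp [del, eps, dl, Pi.single_apply] at this
        rcases hσ with rfl | rfl <;> norm_num at this
      · have := congrArg (fun v => v.2.2 p) h
        simp [del, eps, dl, Pi.single_apply] at this
        rcases hτ with rfl | rfl <;> rcases hτ' with rfl | rfl <;>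
          split_ifs at this <;> norm_num at this
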